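/- Let $A \in \mathbb{C}^{m\times (n_3 n_2)}$ (columns indexed by pairs in $\{1,\dots,n_3\}\times\{1,\dots,n_2\}$), let $C \in \mathbb{C}^{m\times k}$ have full column rank with $C^+ := (C^* C)^{-1} C^*$, and let $W_2 \in \mathbb{C}^{n_2\times r_2}$, $W_3 \in \mathbb{C}^{n_3\times r_3}$ have orthonormal columns ($W_2^* W_2 = I_{r_2}$, $W_3^* W_3 = I_{r_3}$). Set $S_0 := C^+ A (W_3 \otimes W_2)$. Then for every $S \in \mathbb{C}^{k\times (r_3 r_2)}$: $\|A - C S_0 (W_3 \otimes W_2)^*\|_F \le \|A - C S (W_3 \otimes W_2)^*\|_F$. -/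

import Mathlib

open scoped BigOperators Kronecker
open Matrix

/-- Squared Frobenius norm of a complex matrix. -/
noncomputable def frobSq {m n : Type*} [Fintype m] [Fintype n] (M : Matrix m n ℂ) : ℝ :=
  ∑ i, ∑ j, ‖M i j‖ ^ 2

/-- Frobenius norm of a complex matrix. -/
noncomputable def frobNorm {m n : Type*} [Fintype m] [Fintype n] (M : Matrix m n ℂ) : ℝ :=
  Real.sqrt (frobSq M)

/-!
`S₀` solves the normal equations `C^* (A - C S₀ W^*) W = 0` of the least-squares problem
`min_S ‖A - C S W^*‖_F`, where `W = W₃ ⊗ W₂` has orthonormal columns. Hence the residual of `S₀`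
is Frobenius-orthogonal to every `C D W^*`, and Pythagoras with `D = S₀ - S` gives
`‖A - C S W^*‖_F² = ‖A - C S₀ W^*‖_F² + ‖C (S₀ - S) W^*‖_F²`.
-/

section Frobenius

variable {m n : Type*} [Fintype m] [Fintype n]

lemma frobSq_nonneg (M : Matrix m n ℂ) : 0 ≤ frobSq M :=
  Finset.sum_nonneg fun _ _ => Finset.sum_nonneg fun _ _ => by positivity

lemma frobSq_eq_re_trace (M : Matrix m n ℂ) : frobSq M = (Mᴴ * M).trace.re := by
  have hnormSq : ∀ z : ℂ, (star z * z).re = ‖z‖ ^ 2 := fun z => by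
    rw [Complex.star_def, ← Complex.normSq_eq_conj_mul_self, Complex.ofReal_re,
      Complex.normSq_eq_norm_sq]
  simp only [trace, diag, mul_apply, conjTranspose_apply, Complex.re_sum, hnormSq]
  exact Finset.sum_comm

lemma frobSq_add_of_trace_conjTranspose_mul_eq_zero {X Y : Matrix m n ℂ}
    (h : (Xᴴ * Y).trace = 0) : frobSq (X + Y) = frobSq X + frobSq Y := by
  have h' : (Yᴴ * X).trace = 0 := by
    rw [← conjTranspose_conjTranspose X, ← conjTranspose_mul, trace_conjTranspose, h, star_zero]
  simp only [frobSq_eq_re_trace, conjTranspose_add, Matrix.add_mul, Matrix.mul_add, trace_add,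
    h, h', Complex.add_re, add_zero, zero_add]

end Frobenius

lemma trace_conjTranspose_mul_mul_mul_eq_zero {α m n k r : Type*} [Fintype m] [Fintype n]
    [Fintype k] [Fintype r] [CommRing α] [StarRing α] {R : Matrix m n α} {C : Matrix m k α}
    {W : Matrix n r α} (hR : Cᴴ * R * W = 0) (D : Matrix k r α) :
    (Rᴴ * (C * D * Wᴴ)).trace = 0 := by
  have hR' : Wᴴ * Rᴴ * C = 0 := by
    simpa only [conjTranspose_mul, conjTranspose_conjTranspose, conjTranspose_zero,
      Matrix.mul_assoc] using congrArg conjTranspose hR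
  rw [← Matrix.mul_assoc, trace_mul_comm, ← Matrix.mul_assoc, ← Matrix.mul_assoc, hR',
    Matrix.zero_mul, trace_zero]

lemma frobSq_sub_mul_mul_le_of_normal_eq {m n k r : Type*} [Fintype m] [Fintype n] [Fintype k]
    [Fintype r] {A : Matrix m n ℂ} {C : Matrix m k ℂ} {W : Matrix n r ℂ} {S₀ : Matrix k r ℂ}
    (hS₀ : Cᴴ * (A - C * S₀ * Wᴴ) * W = 0) (S : Matrix k r ℂ) :
    frobSq (A - C * S₀ * Wᴴ) ≤ frobSq (A - C * S * Wᴴ) := by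
  have hsplit : A - C * S * Wᴴ = (A - C * S₀ * Wᴴ) + C * (S₀ - S) * Wᴴ := by
    simp only [Matrix.mul_sub, Matrix.sub_mul]
    abel
  rw [hsplit, frobSq_add_of_trace_conjTranspose_mul_eq_zero
    (trace_conjTranspose_mul_mul_mul_eq_zero hS₀ _)]
  exact le_add_of_nonneg_right (frobSq_nonneg _)

lemma conjTranspose_mul_sub_mul_eq_zero_of_pinv {α m n k r : Type*} [Fintype m] [Fintype n]
    [Fintype k] [DecidableEq k] [Fintype r] [DecidableEq r] [CommRing α] [StarRing α]
    (A : Matrix m n α) {C : Matrix m k α} (hC : IsUnit (Cᴴ * C)) {W : Matrix n r α}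
    (hW : Wᴴ * W = 1) :
    Cᴴ * (A - C * ((Cᴴ * C)⁻¹ * Cᴴ * A * W) * Wᴴ) * W = 0 := by
  have hdet : IsUnit (Cᴴ * C).det := (isUnit_iff_isUnit_det _).mp hC
  calc Cᴴ * (A - C * ((Cᴴ * C)⁻¹ * Cᴴ * A * W) * Wᴴ) * W
      = Cᴴ * A * W - (Cᴴ * C) * (Cᴴ * C)⁻¹ * (Cᴴ * A * W) * (Wᴴ * W) := by
        simp only [Matrix.mul_sub, Matrix.sub_mul, Matrix.mul_assoc]
    _ = 0 := by rw [mul_nonsing_inv _ hdet, hW, Matrix.one_mul, Matrix.mul_one, sub_self]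

lemma conjTranspose_kronecker_mul_self_eq_one {α n₁ n₂ r₁ r₂ : Type*} [Fintype n₁]
    [Fintype n₂] [DecidableEq r₁] [DecidableEq r₂] [CommSemiring α] [StarRing α]
    {W₁ : Matrix n₁ r₁ α} {W₂ : Matrix n₂ r₂ α}
    (hW₁ : W₁ᴴ * W₁ = 1) (hW₂ : W₂ᴴ * W₂ = 1) : (W₁ ⊗ₖ W₂)ᴴ * (W₁ ⊗ₖ W₂) = 1 := by
  rw [conjTranspose_kronecker, ← mul_kronecker_mul, hW₁, hW₂, one_kronecker_one]

/-- Optimality of the core tensor in the hybrid algorithm for an order-3 tensor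
(via the mode-1 unfolding `A ∈ ℂ^{m × (n₃ n₂)}`): with `C` of full column rank,
`C⁺ = (C^*C)⁻¹C^*`, `W₂, W₃` with orthonormal columns and
`S₀ = C⁺ A (W₃ ⊗ W₂)`, for every `S`,
`‖A - C S₀ (W₃ ⊗ W₂)^*‖_F ≤ ‖A - C S (W₃ ⊗ W₂)^*‖_F`. -/
theorem core_tensor_optimality_order3 {m k n2 n3 r2 r3 : ℕ}
    (A : Matrix (Fin m) (Fin n3 × Fin n2) ℂ)
    (C : Matrix (Fin m) (Fin k) ℂ) (hC : IsUnit (Cᴴ * C))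
    (W2 : Matrix (Fin n2) (Fin r2) ℂ) (hW2 : W2ᴴ * W2 = 1)
    (W3 : Matrix (Fin n3) (Fin r3) ℂ) (hW3 : W3ᴴ * W3 = 1)
    (S0 : Matrix (Fin k) (Fin r3 × Fin r2) ℂ)
    (hS0 : S0 = ((Cᴴ * C)⁻¹ * Cᴴ) * A * (W3 ⊗ₖ W2)) :
    ∀ S : Matrix (Fin k) (Fin r3 × Fin r2) ℂ,
      frobNorm (A - C * S0 * (W3 ⊗ₖ W2)ᴴ) ≤ frobNorm (A - C * S * (W3 ⊗ₖ W2)ᴴ) := by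
  intro S
  have hnormal : Cᴴ * (A - C * S0 * (W3 ⊗ₖ W2)ᴴ) * (W3 ⊗ₖ W2) = 0 := by
    rw [hS0]
    exact conjTranspose_mul_sub_mul_eq_zero_of_pinv A hC
      (conjTranspose_kronecker_mul_self_eq_one hW3 hW2)
  exact Real.sqrt_le_sqrt (frobSq_sub_mul_mul_le_of_normal_eq hnormal S)
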